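/- arXiv:1003.3379 — 2 statements merged into one kernel-verified Lean document; each statement's English description precedes it below -/
import Mathlib

section
/- Let A and B be Banach algebras, let T : A → B be a bounded linear surjective map, and define the bounded bilinear map m : A × B → B by m(a,b) = T(a)b (product taken in B). Then B is Arens regular if and only if m is Arens regular. -/
open Filter Topology ContinuousLinearMap NormedSpace

set_option maxSynthPendingDepth 2

noncomputable section

variable {X Y Z W E F : Type*}
  [NormedAddCommGroup X] [NormedSpace ℂ X]
  [NormedAddCommGroup Y] [NormedSpace ℂ Y]
  [NormedAddCommGroup Z] [NormedSpace ℂ Z]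
  [NormedAddCommGroup E] [NormedSpace ℂ E]
  [NormedAddCommGroup F] [NormedSpace ℂ F]

/-- The (first) Arens adjoint `m* : Z* × X → Y*` of a bounded bilinear map
`m : X × Y → Z`, characterized by `⟨m*(z',x), y⟩ = ⟨z', m(x,y)⟩`. -/
noncomputable def arensAdj (m : X →L[ℂ] Y →L[ℂ] Z) :
    StrongDual ℂ Z →L[ℂ] X →L[ℂ] StrongDual ℂ Y :=
  ((ContinuousLinearMap.compL ℂ Y Z ℂ).flip.comp m).flip

/-- The Arens triple adjoint `m*** : X** × Y** → Z**`. -/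
noncomputable def arensExt (m : X →L[ℂ] Y →L[ℂ] Z) :
    StrongDual ℂ (StrongDual ℂ X) →L[ℂ] StrongDual ℂ (StrongDual ℂ Y) →L[ℂ] StrongDual ℂ (StrongDual ℂ Z) :=
  arensAdj (arensAdj (arensAdj m))

/-- A map between dual spaces is weak*-weak* continuous. -/
def IsWeakStarCont (f : StrongDual ℂ E → StrongDual ℂ F) : Prop :=
  Continuous fun x : WeakDual ℂ E =>
    StrongDual.toWeakDual (f (WeakDual.toStrongDual x))

/-- First topological center of a bounded bilinear map. -/
def arensZ1 (m : X →L[ℂ] Y →L[ℂ] Z) : Set (StrongDual ℂ (StrongDual ℂ X)) :=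
  {x'' | IsWeakStarCont fun y'' => arensExt m x'' y''}

/-- Second topological center of a bounded bilinear map. -/
def arensZ2 (m : X →L[ℂ] Y →L[ℂ] Z) : Set (StrongDual ℂ (StrongDual ℂ Y)) :=
  {y'' | IsWeakStarCont fun x'' => arensExt m.flip y'' x''}

/-- `m` is Arens regular when `m*** = m^{t***t}`. -/
def ArensRegular (m : X →L[ℂ] Y →L[ℂ] Z) : Prop :=
  arensExt m = (arensExt m.flip).flip

/-- `m` is left strongly Arens irregular when `Z₁(m)` is the canonical image of `X`. -/
def LeftStronglyArensIrregular (m : X →L[ℂ] Y →L[ℂ] Z) : Prop :=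
  arensZ1 m = Set.range (NormedSpace.inclusionInDoubleDual ℂ X)

/-- `m` is right strongly Arens irregular when `Z₂(m)` is the canonical image of `Y`. -/
def RightStronglyArensIrregular (m : X →L[ℂ] Y →L[ℂ] Z) : Prop :=
  arensZ2 m = Set.range (NormedSpace.inclusionInDoubleDual ℂ Y)

/-- The adjoint `T* : F* → E*` of a bounded linear map. -/
noncomputable def dualMap' (T : E →L[ℂ] F) : StrongDual ℂ F →L[ℂ] StrongDual ℂ E :=
  (ContinuousLinearMap.compL ℂ E F ℂ).flip T

/-- The second adjoint `T** : E** → F**` of a bounded linear map. -/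
noncomputable def bidualMap (T : E →L[ℂ] F) :
    StrongDual ℂ (StrongDual ℂ E) →L[ℂ] StrongDual ℂ (StrongDual ℂ F) :=
  dualMap' (dualMap' T)

/-- A net in `A`: a function from a nonempty directed preorder to `A`. -/
structure Net (A : Type*) where
  ι : Type
  [pre : Preorder ι]
  [dir : IsDirected ι (· ≤ ·)]
  [ne : Nonempty ι]
  e : ι → A

attribute [instance] Net.pre Net.dir Net.ne

/-- A bounded approximate identity for a (non-unital) Banach algebra. -/
def IsBAI {A : Type*} [NonUnitalNormedRing A] (N : Net A) : Prop :=
  (∃ C : ℝ, ∀ i, ‖N.e i‖ ≤ C) ∧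
  (∀ a : A, Tendsto (fun i => N.e i * a) atTop (𝓝 a)) ∧
  (∀ a : A, Tendsto (fun i => a * N.e i) atTop (𝓝 a))

end

/-!
Precomposing `n` with `T` precomposes both `n***` and `n^{t***t}` with `T** × id`, so regularity
of `n` passes to `n ∘ T`, and back as soon as `T**` is onto. For `T` onto, the open mapping theorem
bounds `T*` below; hence `T*` is injective with closed range, and Hahn–Banach extends every
functional on that range, i.e. `T** = (T*)*` is onto.
-/

section Bidual

variable {X Y Z E : Type*}
  [NormedAddCommGroup X] [NormedSpace ℂ X]
  [NormedAddCommGroup Y] [NormedSpace ℂ Y]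
  [NormedAddCommGroup Z] [NormedSpace ℂ Z]
  [NormedAddCommGroup E] [NormedSpace ℂ E]

theorem antilipschitz_dualMap'_of_surjective [CompleteSpace X] [CompleteSpace E]
    {T : X →L[ℂ] E} (hT : Function.Surjective T) : ∃ K, AntilipschitzWith K (dualMap' T) := by
  obtain ⟨C, hC0, hC⟩ := T.exists_preimage_norm_le hT
  refine ⟨⟨C, hC0.le⟩, (dualMap' T).antilipschitz_of_bound fun f => ?_⟩
  refine f.opNorm_le_bound (by positivity) fun y => ?_
  obtain ⟨x, rfl, hx⟩ := hC y
  calc ‖f (T x)‖ = ‖dualMap' T f x‖ := rfl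
    _ ≤ ‖dualMap' T f‖ * ‖x‖ := (dualMap' T f).le_opNorm x
    _ ≤ ‖dualMap' T f‖ * (C * ‖T x‖) := by gcongr
    _ = C * ‖dualMap' T f‖ * ‖T x‖ := by ring

theorem dualMap'_surjective_of_isClosed_range [CompleteSpace X] [CompleteSpace E] {S : X →L[ℂ] E}
    (hinj : Function.Injective S) (hclo : IsClosed (Set.range S)) :
    Function.Surjective (dualMap' S) := by
  intro φ
  obtain ⟨ψ, hψ, -⟩ := exists_extension_norm_eq (S : X →ₗ[ℂ] E).range
    (φ.comp (S.equivRange hinj hclo).symm.toContinuousLinearMap)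
  refine ⟨ψ, ContinuousLinearMap.ext fun x => ?_⟩
  show ψ (S x) = φ x
  simpa using hψ ⟨S x, (S : X →ₗ[ℂ] E).mem_range_self x⟩

theorem bidualMap_surjective [CompleteSpace X] [CompleteSpace E] {T : X →L[ℂ] E}
    (hT : Function.Surjective T) : Function.Surjective (bidualMap T) := by
  obtain ⟨K, hK⟩ := antilipschitz_dualMap'_of_surjective hT
  exact dualMap'_surjective_of_isClosed_range hK.injective
    (hK.isClosed_range (dualMap' T).uniformContinuous)

theorem arensExt_comp (n : E →L[ℂ] Y →L[ℂ] Z) (T : X →L[ℂ] E) :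
    arensExt (n.comp T) = (arensExt n).comp (bidualMap T) :=
  rfl

theorem arensExt_flip_comp_apply (n : E →L[ℂ] Y →L[ℂ] Z) (T : X →L[ℂ] E)
    (y'' : StrongDual ℂ (StrongDual ℂ Y)) (x'' : StrongDual ℂ (StrongDual ℂ X)) :
    arensExt (n.comp T).flip y'' x'' = arensExt n.flip y'' (bidualMap T x'') :=
  rfl

theorem ArensRegular.comp {n : E →L[ℂ] Y →L[ℂ] Z} (h : ArensRegular n) (T : X →L[ℂ] E) :
    ArensRegular (n.comp T) := by
  ext x'' y'' : 2
  rw [arensExt_comp, flip_apply, arensExt_flip_comp_apply]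
  exact congr($h (bidualMap T x'') y'')

theorem arensRegular_comp_iff [CompleteSpace X] [CompleteSpace E] (n : E →L[ℂ] Y →L[ℂ] Z)
    {T : X →L[ℂ] E} (hT : Function.Surjective T) :
    ArensRegular (n.comp T) ↔ ArensRegular n := by
  refine ⟨fun h => ?_, fun h => h.comp T⟩
  ext e'' y'' : 2
  obtain ⟨x'', rfl⟩ := bidualMap_surjective hT e''
  rw [flip_apply, ← arensExt_flip_comp_apply, ← comp_apply, ← arensExt_comp]
  exact congr($h x'' y'')

end Bidual

theorem stmt_1_general {A B : Type*} [NonUnitalNormedRing A] [NormedSpace ℂ A] [CompleteSpace A] [NonUnitalNormedRing B] [NormedSpace ℂ B] [IsScalarTower ℂ B B] [SMulCommClass ℂ B B] [CompleteSpace B]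
    (T : A →L[ℂ] B) (hT : Function.Surjective T) :
    ArensRegular (ContinuousLinearMap.mul ℂ B) ↔
      ArensRegular ((ContinuousLinearMap.mul ℂ B).comp T) :=
  (arensRegular_comp_iff _ hT).symm

/-- For surjective `T`, `B` is Arens regular iff `m(a,b) = T(a)b` is. -/
theorem stmt_1 {A B : Type*} [NonUnitalNormedRing A] [NormedSpace ℂ A] [IsScalarTower ℂ A A] [SMulCommClass ℂ A A] [CompleteSpace A] [NonUnitalNormedRing B] [NormedSpace ℂ B] [IsScalarTower ℂ B B] [SMulCommClass ℂ B B] [CompleteSpace B]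
    (T : A →L[ℂ] B) (hT : Function.Surjective T) :
    ArensRegular (ContinuousLinearMap.mul ℂ B) ↔
      ArensRegular ((ContinuousLinearMap.mul ℂ B).comp T) :=
  stmt_1_general T hT
end

section
/- Let A and B be Banach algebras and let T : A → B be a bounded algebra homomorphism which is weakly compact (the image of the closed unit ball of A under T is relatively weakly compact in B). Then the bounded bilinear map m : A × A → B defined by m(a₁,a₂) = T(a₁a₂) is Arens regular. -/
open Filter Topology ContinuousLinearMap NormedSpace

/-! Weak compactness of `T` means (Gantmacher) that `T**` maps `A**` into the canonical image
of `B`: if `‖G‖ ≤ 1` and `T**G` were outside the weak*-closure `C` of the image of the unit ball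
of `A` in `B**`, which is convex and compact, Hahn–Banach would give `φ ∈ B*` and `u` with
`Re φ < u` on `C` and `u < Re (T**G)(φ)`; since the ball is balanced, `‖T*φ‖ ≤ u`, which
contradicts `|(T**G)(φ)| = |G(T*φ)| ≤ ‖T*φ‖`.

Because `T` is multiplicative, `m` is the product of `B` composed with `T × T`. Arens extensions
commute with such compositions, `m***(F, G) = mul***(T**F, T**G)`, and similarly for `m^t`;
on canonical images both extensions of the product are just the product in `B`. -/

theorem Balanced.norm_le_of_forall_re_le {𝕜 E : Type*} [RCLike 𝕜] [AddCommGroup E] [Module 𝕜 E]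
    {s : Set E} (hs : Balanced 𝕜 s) (f : E →ₗ[𝕜] 𝕜) {u : ℝ} (h : ∀ x ∈ s, RCLike.re (f x) ≤ u)
    {x : E} (hx : x ∈ s) : ‖f x‖ ≤ u := by
  -- `θ` rotates `f x` onto `‖f x‖`; when `f x = 0` it is `0 / 0 = 0`, which still works.
  set θ : 𝕜 := (‖f x‖ : 𝕜) / f x
  have hθ : ‖θ‖ ≤ 1 := by
    rw [norm_div, RCLike.norm_ofReal, abs_norm]
    exact div_self_le_one _
  have hfθ : f (θ • x) = ‖f x‖ := by
    rw [map_smul, smul_eq_mul, div_mul_cancel_of_imp]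
    intro h0
    simp [h0]
  simpa [hfθ] using h _ (hs.smul_mem hθ hx)

theorem StrongDual.norm_le_of_forall_re_le {𝕜 E : Type*} [RCLike 𝕜] [NormedAddCommGroup E]
    [NormedSpace 𝕜 E] (f : StrongDual 𝕜 E) {u : ℝ}
    (h : ∀ x ∈ Metric.closedBall (0 : E) 1, RCLike.re (f x) ≤ u) : ‖f‖ ≤ u := by
  simpa using f.opNorm_bound_of_ball_bound one_pos u fun x hx =>
    (balanced_closedBall_zero (𝕜 := 𝕜)).norm_le_of_forall_re_le f.toLinearMap h hx

theorem WeakDual.exists_apply_eq_eval {𝕜 E : Type*} [NontriviallyNormedField 𝕜] [AddCommGroup E]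
    [TopologicalSpace E] [Module 𝕜 E] [IsTopologicalAddGroup E] [ContinuousConstSMul 𝕜 E]
    (f : StrongDual 𝕜 (WeakDual 𝕜 E)) : ∃ y : E, ∀ x : WeakDual 𝕜 E, f x = x y := by
  obtain ⟨y, rfl⟩ := LinearMap.dualEmbedding_surjective (topDualPairing 𝕜 E) f
  exact ⟨y, fun _ => rfl⟩

section WeaklyCompact

variable {A B : Type*} [NormedAddCommGroup A] [NormedSpace ℂ A]
  [NormedAddCommGroup B] [NormedSpace ℂ B]

variable (B) in
noncomputable def weakInclusionInDoubleDual : WeakSpace ℂ B →L[ℂ] WeakDual ℂ (StrongDual ℂ B) where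
  toLinearMap := StrongDual.toWeakDual.toLinearMap ∘ₗ
    (inclusionInDoubleDual ℂ B).toLinearMap ∘ₗ (toWeakSpace ℂ B).symm.toLinearMap
  cont := WeakBilin.continuous_of_continuous_eval _ fun φ =>
    WeakBilin.eval_continuous (topDualPairing ℂ B).flip φ

theorem toWeakDual_bidualMap_mem_image_closure {T : A →L[ℂ] B}
    (hwc : IsCompact (closure (toWeakSpace ℂ B '' (T '' Metric.closedBall (0 : A) 1))))
    {G : StrongDual ℂ (StrongDual ℂ A)} (hG : ‖G‖ ≤ 1) :
    StrongDual.toWeakDual (bidualMap T G) ∈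
      weakInclusionInDoubleDual B '' closure (toWeakSpace ℂ B '' (T '' Metric.closedBall 0 1)) := by
  set C := weakInclusionInDoubleDual B '' closure (toWeakSpace ℂ B '' (T '' Metric.closedBall 0 1))
  have : IsScalarTower ℝ ℂ (WeakDual ℂ (StrongDual ℂ B)) := ContinuousLinearMap.isScalarTower
  have : ContinuousSMul ℝ (WeakSpace ℂ B) := IsScalarTower.continuousSMul ℂ
  -- `WeakDual` and `WeakBilin` carry different, only definitionally equal, `ℝ`-module instances.
  have : LocallyConvexSpace ℝ (WeakDual ℂ (StrongDual ℂ B)) := by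
    exact (WeakBilin.locallyConvexSpace (𝕜 := ℂ) (E := StrongDual ℂ (StrongDual ℂ B))
      (F := StrongDual ℂ B) (B := topDualPairing ℂ (StrongDual ℂ B)) :)
  have hconv : Convex ℝ C :=
    ((((convex_closedBall 0 1).linear_image (T.toLinearMap.restrictScalars ℝ)).linear_image
      ((toWeakSpace ℂ B).toLinearMap.restrictScalars ℝ)).closure).linear_image
      ((weakInclusionInDoubleDual B).toLinearMap.restrictScalars ℝ)
  by_contra hG'
  obtain ⟨f, u, hfC, hfG⟩ := RCLike.geometric_hahn_banach_closed_point (𝕜 := ℂ) hconv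
    (hwc.image (weakInclusionInDoubleDual B).continuous).isClosed hG'
  obtain ⟨φ, hφ⟩ := WeakDual.exists_apply_eq_eval f
  have hTφ : ‖dualMap' T φ‖ ≤ u := StrongDual.norm_le_of_forall_re_le _ fun a ha => by
    have h := hfC _ ⟨_, subset_closure ⟨T a, ⟨a, ha, rfl⟩, rfl⟩, rfl⟩
    rw [hφ] at h
    exact h.le
  rw [hφ] at hfG
  have : RCLike.re (G (dualMap' T φ)) ≤ u := calc
    _ ≤ ‖G (dualMap' T φ)‖ := RCLike.re_le_norm _
    _ ≤ ‖G‖ * ‖dualMap' T φ‖ := G.le_opNorm _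
    _ ≤ u := by nlinarith [norm_nonneg (dualMap' T φ), norm_nonneg G]
  exact hfG.not_ge this

set_option maxSynthPendingDepth 2 in
theorem range_bidualMap_subset_of_isCompact {T : A →L[ℂ] B}
    (hwc : IsCompact (closure (toWeakSpace ℂ B '' (T '' Metric.closedBall (0 : A) 1)))) :
    Set.range (bidualMap T) ⊆ Set.range (inclusionInDoubleDual ℂ B) := by
  have hball : ∀ G, ‖G‖ ≤ 1 → bidualMap T G ∈ Set.range (inclusionInDoubleDual ℂ B) := by
    intro G hG
    obtain ⟨c, -, hc⟩ := toWeakDual_bidualMap_mem_image_closure hwc hG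
    exact ⟨(toWeakSpace ℂ B).symm c, hc⟩
  rintro _ ⟨F, rfl⟩
  rcases eq_or_ne F 0 with rfl | hF
  · exact ⟨0, by simp⟩
  · have hF' : ‖F‖ ≠ 0 := norm_ne_zero_iff.mpr hF
    obtain ⟨c, hc⟩ := hball ((‖F‖ : ℂ)⁻¹ • F) (by
      rw [norm_smul, norm_inv, Complex.norm_real, norm_norm, inv_mul_cancel₀ hF'])
    refine ⟨(‖F‖ : ℂ) • c, ?_⟩
    rw [map_smul, hc, ← map_smul, smul_inv_smul₀ (Complex.ofReal_ne_zero.mpr hF')]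

end WeaklyCompact

section ArensExtension

variable {X Y Z X₁ Y₁ : Type*}
  [NormedAddCommGroup X] [NormedSpace ℂ X] [NormedAddCommGroup Y] [NormedSpace ℂ Y]
  [NormedAddCommGroup Z] [NormedSpace ℂ Z] [NormedAddCommGroup X₁] [NormedSpace ℂ X₁]
  [NormedAddCommGroup Y₁] [NormedSpace ℂ Y₁]

theorem arensExt_bilinearComp (n : X₁ →L[ℂ] Y₁ →L[ℂ] Z) (S : X →L[ℂ] X₁) (R : Y →L[ℂ] Y₁)
    (F : StrongDual ℂ (StrongDual ℂ X)) (G : StrongDual ℂ (StrongDual ℂ Y)) :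
    arensExt (n.bilinearComp S R) F G = arensExt n (bidualMap S F) (bidualMap R G) :=
  rfl

theorem arensExt_inclusionInDoubleDual (n : X →L[ℂ] Y →L[ℂ] Z) (x : X) (y : Y) :
    arensExt n (inclusionInDoubleDual ℂ X x) (inclusionInDoubleDual ℂ Y y) =
      inclusionInDoubleDual ℂ Z (n x y) :=
  rfl

theorem arensRegular_bilinearComp (n : X₁ →L[ℂ] Y₁ →L[ℂ] Z) {S : X →L[ℂ] X₁} {R : Y →L[ℂ] Y₁}
    (hS : Set.range (bidualMap S) ⊆ Set.range (inclusionInDoubleDual ℂ X₁))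
    (hR : Set.range (bidualMap R) ⊆ Set.range (inclusionInDoubleDual ℂ Y₁)) :
    ArensRegular (n.bilinearComp S R) := by
  refine DFunLike.ext _ _ fun F => DFunLike.ext _ _ fun G => ?_
  obtain ⟨x, hx⟩ := hS ⟨F, rfl⟩
  obtain ⟨y, hy⟩ := hR ⟨G, rfl⟩
  change arensExt (n.bilinearComp S R) F G = arensExt (n.flip.bilinearComp R S) G F
  rw [arensExt_bilinearComp, arensExt_bilinearComp, ← hx, ← hy,
    arensExt_inclusionInDoubleDual, arensExt_inclusionInDoubleDual, flip_apply]

end ArensExtension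

theorem stmt_9_general {A B : Type*} [NonUnitalNormedRing A] [NormedSpace ℂ A] [IsScalarTower ℂ A A] [SMulCommClass ℂ A A] [NonUnitalNormedRing B] [NormedSpace ℂ B] [IsScalarTower ℂ B B] [SMulCommClass ℂ B B]
    (T : A →L[ℂ] B)
    (hhom : ∀ a b : A, T (a * b) = T a * T b)
    (hwc : IsCompact (closure (toWeakSpace ℂ B '' (T '' Metric.closedBall (0 : A) 1)))) :
    ArensRegular
      ((ContinuousLinearMap.compL ℂ A A B T).comp (ContinuousLinearMap.mul ℂ A)) := by
  have hm : (ContinuousLinearMap.compL ℂ A A B T).comp (ContinuousLinearMap.mul ℂ A) =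
      (ContinuousLinearMap.mul ℂ B).bilinearComp T T := by
    ext a b
    exact hhom a b
  rw [hm]
  exact arensRegular_bilinearComp _ (range_bidualMap_subset_of_isCompact hwc)
    (range_bidualMap_subset_of_isCompact hwc)

/-- If `T : A → B` is a weakly compact bounded algebra homomorphism,
then `m(a₁,a₂) = T(a₁a₂)` is Arens regular. -/
theorem stmt_9 {A B : Type*} [NonUnitalNormedRing A] [NormedSpace ℂ A] [IsScalarTower ℂ A A] [SMulCommClass ℂ A A] [CompleteSpace A] [NonUnitalNormedRing B] [NormedSpace ℂ B] [IsScalarTower ℂ B B] [SMulCommClass ℂ B B] [CompleteSpace B]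
    (T : A →L[ℂ] B)
    (hhom : ∀ a b : A, T (a * b) = T a * T b)
    (hwc : IsCompact (closure (toWeakSpace ℂ B '' (T '' Metric.closedBall (0 : A) 1)))) :
    ArensRegular
      ((ContinuousLinearMap.compL ℂ A A B T).comp (ContinuousLinearMap.mul ℂ A)) :=
  stmt_9_general T hhom hwc
end
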